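/- For every smooth function f : ℝⁿ → ℝ and every x ∈ ℝⁿ, B(x)^{−T}·∇(Lf)(x) = (L^∥_B G)(x) − M_B(x)·G(x), where G is the twisted gradient vector field G(x) = B(x)^{−T}∇f(x). (Twisted intertwining at the level of generators, equation (4.12) of the paper, Euclidean instance.) -/

import Mathlib

open MeasureTheory Real Filter Matrix
open scoped RealInnerProductSpace ContDiff

noncomputable section

abbrev E (n : ℕ) := EuclideanSpace ℝ (Fin n)

def gibbs (n : ℕ) (V : E n → ℝ) : Measure (E n) :=
  MeasureTheory.volume.withDensity fun x => ENNReal.ofReal (Real.exp (-V x))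

def pd {n : ℕ} (f : E n → ℝ) (i : Fin n) (x : E n) : ℝ :=
  fderiv ℝ f x (EuclideanSpace.single i 1)

def Lop {n : ℕ} (V f : E n → ℝ) (x : E n) : ℝ :=
  (∑ i, pd (pd f i) i x) - ⟪gradient V x, gradient f x⟫

def matVec {n : ℕ} (M : Matrix (Fin n) (Fin n) ℝ) (v : E n) : E n :=
  (EuclideanSpace.equiv (Fin n) ℝ).symm (M.mulVec (EuclideanSpace.equiv (Fin n) ℝ v))

def hessM {n : ℕ} (V : E n → ℝ) (x : E n) : Matrix (Fin n) (Fin n) ℝ :=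
  Matrix.of fun i j => pd (pd V j) i x

/-- Partial derivative of a vector field in the `i`-th coordinate direction. -/
def pdV {n : ℕ} (α : E n → E n) (i : Fin n) (x : E n) : E n :=
  fderiv ℝ α x (EuclideanSpace.single i 1)

/-- Partial derivative of a matrix-valued map, entrywise. -/
def pdM {n : ℕ} (A : E n → Matrix (Fin n) (Fin n) ℝ) (i : Fin n) (x : E n) :
    Matrix (Fin n) (Fin n) ℝ :=
  Matrix.of fun k l => fderiv ℝ (fun y => A y k l) x (EuclideanSpace.single i 1)

/-- The operator `L^∥`, applying `L` componentwise to a vector field. -/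
def LparV {n : ℕ} (V : E n → ℝ) (α : E n → E n) (x : E n) : E n :=
  (EuclideanSpace.equiv (Fin n) ℝ).symm fun k => Lop V (fun y => α y k) x

/-- The operator `L^∥` applied entrywise to a matrix-valued map. -/
def LparM {n : ℕ} (V : E n → ℝ) (A : E n → Matrix (Fin n) (Fin n) ℝ) (x : E n) :
    Matrix (Fin n) (Fin n) ℝ :=
  Matrix.of fun k l => Lop V (fun y => A y k l) x

/-- The twisted operator `L^∥_B α = L^∥ α + 2 B^{-T} ∑ i (∂_i B^T)(∂_i α)`. -/
def LparB {n : ℕ} (V : E n → ℝ) (B : E n → Matrix (Fin n) (Fin n) ℝ)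
    (α : E n → E n) (x : E n) : E n :=
  LparV V α x +
    (2 : ℝ) • matVec ((B x)ᵀ)⁻¹ (∑ i, matVec (pdM (fun y => (B y)ᵀ) i x) (pdV α i x))

/-- The matrix `S = Hess V - (L^∥ B^T) B^{-T}`, so that `S = B^T M_B B^{-T}`. -/
def Smat {n : ℕ} (V : E n → ℝ) (B : E n → Matrix (Fin n) (Fin n) ℝ) (x : E n) :
    Matrix (Fin n) (Fin n) ℝ :=
  hessM V x - LparM V (fun y => (B y)ᵀ) x * ((B x)ᵀ)⁻¹

/-- The matrix potential `M_B = B^{-T}(Hess V)B^T - B^{-T}(L^∥ B^T)`. -/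
def MB {n : ℕ} (V : E n → ℝ) (B : E n → Matrix (Fin n) (Fin n) ℝ) (x : E n) :
    Matrix (Fin n) (Fin n) ℝ :=
  ((B x)ᵀ)⁻¹ * hessM V x * (B x)ᵀ - ((B x)ᵀ)⁻¹ * LparM V (fun y => (B y)ᵀ) x

/-- The twisted inner product `⟨u, v⟩_B = ⟨B^T u, B^T v⟩` at the point `x`. -/
def tinner {n : ℕ} (B : E n → Matrix (Fin n) (Fin n) ℝ) (x : E n) (u v : E n) : ℝ :=
  ⟪matVec (B x)ᵀ u, matVec (B x)ᵀ v⟫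

/-- The matrix `𝔹_i = ((∂_i B^T) B^{-T})^T - (∂_i B^T) B^{-T}`. -/
def BBm {n : ℕ} (B : E n → Matrix (Fin n) (Fin n) ℝ) (i : Fin n) (x : E n) :
    Matrix (Fin n) (Fin n) ℝ :=
  (pdM (fun y => (B y)ᵀ) i x * ((B x)ᵀ)⁻¹)ᵀ - pdM (fun y => (B y)ᵀ) i x * ((B x)ᵀ)⁻¹

/-- The matrix `N_B = (1/4) ∑ i 𝔹_i^T 𝔹_i`. -/
def NB {n : ℕ} (B : E n → Matrix (Fin n) (Fin n) ℝ) (x : E n) :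
    Matrix (Fin n) (Fin n) ℝ :=
  (1 / 4 : ℝ) • ∑ i, (BBm B i x)ᵀ * BBm B i x

/-- The symmetric part `S^s = (S + S^T)/2` of the matrix `S`. -/
def Ssym {n : ℕ} (V : E n → ℝ) (B : E n → Matrix (Fin n) (Fin n) ℝ) (x : E n) :
    Matrix (Fin n) (Fin n) ℝ :=
  (1 / 2 : ℝ) • (Smat V B x + (Smat V B x)ᵀ)

/-!
Write `C = B^{-T}` and `g = ∇f`, so that `G = C g`. Bochner's commutation
`∂ₘ(L f) = L(∂ₘ f) - (Hess V ∇f)ₘ` turns the left side into `C (L^∥ g - Hess V g)`. On the right,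
the Leibniz rule `L(u v) = u L v + (L u) v + 2 ⟨∇u, ∇v⟩` expands `L^∥(C g)` and `∂ᵢ(C g)`, and the
derivatives of `C` are eliminated by applying `∂ᵢ` and `L` to the constant `B^T C = 1`. What remains
is an identity between matrices.
-/

open Finset

section PartialDerivatives

variable {n : ℕ}

theorem ContDiff.pd {k : ℕ∞ω} {f : E n → ℝ} (hf : ContDiff ℝ (k + 1) f) (i : Fin n) :
    ContDiff ℝ k (pd f i) :=
  (hf.fderiv_right le_rfl).clm_apply contDiff_const

theorem pd_const (c : ℝ) (i : Fin n) (x : E n) : pd (fun _ => c) i x = 0 := by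
  simp [pd]

theorem pd_add {f g : E n → ℝ} {x : E n} (hf : DifferentiableAt ℝ f x)
    (hg : DifferentiableAt ℝ g x) (i : Fin n) :
    pd (fun y => f y + g y) i x = pd f i x + pd g i x := by
  simp [pd, fderiv_fun_add hf hg]

theorem pd_sub {f g : E n → ℝ} {x : E n} (hf : DifferentiableAt ℝ f x)
    (hg : DifferentiableAt ℝ g x) (i : Fin n) :
    pd (fun y => f y - g y) i x = pd f i x - pd g i x := by
  simp [pd, fderiv_fun_sub hf hg]

theorem pd_mul {f g : E n → ℝ} {x : E n} (hf : DifferentiableAt ℝ f x)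
    (hg : DifferentiableAt ℝ g x) (i : Fin n) :
    pd (fun y => f y * g y) i x = pd f i x * g x + f x * pd g i x := by
  simp only [pd, fderiv_fun_mul hf hg, _root_.add_apply, _root_.smul_apply,
    smul_eq_mul]
  ring

theorem pd_sum {ι : Type*} (s : Finset ι) {f : ι → E n → ℝ} {x : E n}
    (hf : ∀ j ∈ s, DifferentiableAt ℝ (f j) x) (i : Fin n) :
    pd (fun y => ∑ j ∈ s, f j y) i x = ∑ j ∈ s, pd (f j) i x := by
  simp [pd, fderiv_fun_sum hf]

theorem pd_comm {f : E n → ℝ} (hf : ContDiff ℝ 2 f) (i j : Fin n) (x : E n) :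
    pd (pd f i) j x = pd (pd f j) i x := by
  have hd : DifferentiableAt ℝ (fderiv ℝ f) x :=
    ((hf.fderiv_right (m := 1) le_rfl).differentiable one_ne_zero) x
  have hpd : ∀ v w : E n, fderiv ℝ (fun y => fderiv ℝ f y w) x v = fderiv ℝ (fderiv ℝ f) x v w :=
    fun v w => by simp [fderiv_clm_apply hd (differentiableAt_const _)]
  unfold pd
  rw [hpd, hpd]
  exact hf.contDiffAt.isSymmSndFDerivAt (by simp) _ _

theorem gradient_apply (f : E n → ℝ) (x : E n) (k : Fin n) : gradient f x k = pd f k x := by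
  have h : ⟪gradient f x, EuclideanSpace.single k 1⟫ = pd f k x :=
    InnerProductSpace.toDual_symm_apply
  rwa [EuclideanSpace.inner_single_right, conj_trivial, one_mul] at h

end PartialDerivatives

section Generator

variable {n : ℕ} (V : E n → ℝ)

theorem Lop_eq_sum (h : E n → ℝ) (x : E n) :
    Lop V h x = ∑ i, (pd (pd h i) i x - pd V i x * pd h i x) := by
  rw [Lop, PiLp.inner_apply, ← Finset.sum_sub_distrib]
  simp only [gradient_apply, RCLike.inner_apply, conj_trivial, mul_comm]

theorem Lop_const (c : ℝ) (x : E n) : Lop V (fun _ => c) x = 0 := by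
  have h : ∀ i, pd (fun _ : E n => c) i = fun _ => 0 := fun i => funext (pd_const c i)
  simp [Lop_eq_sum, h, pd_const]

theorem Lop_sum {ι : Type*} (s : Finset ι) {u : ι → E n → ℝ}
    (hu : ∀ j ∈ s, ContDiff ℝ 2 (u j)) (x : E n) :
    Lop V (fun y => ∑ j ∈ s, u j y) x = ∑ j ∈ s, Lop V (u j) x := by
  have hpd : ∀ i, pd (fun y => ∑ j ∈ s, u j y) i = fun y => ∑ j ∈ s, pd (u j) i y :=
    fun i => funext fun y =>
      pd_sum s (fun j hj => ((hu j hj).differentiable two_ne_zero).differentiableAt) i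
  have hpd2 : ∀ i, pd (fun y => ∑ j ∈ s, pd (u j) i y) i x = ∑ j ∈ s, pd (pd (u j) i) i x :=
    fun i => pd_sum s (fun j hj => (((hu j hj).pd i).differentiable one_ne_zero).differentiableAt) i
  simp only [Lop_eq_sum, hpd, hpd2, Finset.mul_sum, ← Finset.sum_sub_distrib]
  exact Finset.sum_comm

theorem Lop_mul {u v : E n → ℝ} (hu : ContDiff ℝ 2 u) (hv : ContDiff ℝ 2 v) (x : E n) :
    Lop V (fun y => u y * v y) x =
      u x * Lop V v x + Lop V u x * v x + 2 * ∑ i, pd u i x * pd v i x := by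
  have hu1 : ∀ i, Differentiable ℝ (pd u i) := fun i => (hu.pd i).differentiable one_ne_zero
  have hv1 : ∀ i, Differentiable ℝ (pd v i) := fun i => (hv.pd i).differentiable one_ne_zero
  have hud := hu.differentiable two_ne_zero
  have hvd := hv.differentiable two_ne_zero
  have hpd : ∀ i, pd (fun y => u y * v y) i = fun y => pd u i y * v y + u y * pd v i y :=
    fun i => funext fun y => pd_mul (hud y) (hvd y) i
  have hpd2 : ∀ i, pd (pd (fun y => u y * v y) i) i x =
      pd (pd u i) i x * v x + 2 * (pd u i x * pd v i x) + u x * pd (pd v i) i x := by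
    intro i
    rw [hpd, pd_add ((hu1 i x).fun_mul (hvd x)) ((hud x).fun_mul (hv1 i x)),
      pd_mul (hu1 i x) (hvd x), pd_mul (hud x) (hv1 i x)]
    ring
  rw [Lop_eq_sum, Lop_eq_sum, Lop_eq_sum, Finset.mul_sum, Finset.sum_mul, Finset.mul_sum,
    ← Finset.sum_add_distrib, ← Finset.sum_add_distrib]
  refine Finset.sum_congr rfl fun i _ => ?_
  rw [hpd2, pd_mul (hud x) (hvd x)]
  ring

theorem Lop_sum_mul {ι : Type*} [Fintype ι] {a b : ι → E n → ℝ}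
    (ha : ∀ m, ContDiff ℝ 2 (a m)) (hb : ∀ m, ContDiff ℝ 2 (b m)) (x : E n) :
    Lop V (fun y => ∑ m, a m y * b m y) x =
      ∑ m, (a m x * Lop V (b m) x + Lop V (a m) x * b m x +
        2 * ∑ i, pd (a m) i x * pd (b m) i x) := by
  rw [Lop_sum V univ fun m _ => (ha m).mul (hb m)]
  exact Finset.sum_congr rfl fun m _ => Lop_mul V (ha m) (hb m) x

theorem pd_Lop {f : E n → ℝ} (hV : ContDiff ℝ 2 V) (hf : ContDiff ℝ 3 f) (m : Fin n) (x : E n) :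
    pd (Lop V f) m x = Lop V (pd f m) x - ∑ j, pd (pd V j) m x * pd f j x := by
  have hf2 : ContDiff ℝ 2 f := hf.of_le (by norm_num)
  have hd1 : ∀ i, Differentiable ℝ (pd (pd f i) i) :=
    fun i => (((hf.pd i).pd i).differentiable one_ne_zero)
  have hd2 : ∀ i, Differentiable ℝ fun y => pd V i y * pd f i y :=
    fun i => ((hV.pd i).mul (hf2.pd i)).differentiable one_ne_zero
  have hthird : ∀ i, pd (pd (pd f i) i) m x = pd (pd (pd f m) i) i x := by
    intro i
    rw [pd_comm (hf.pd i) i m, show pd (pd f i) m = pd (pd f m) i from funext (pd_comm hf2 i m)]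
  have hdrift : ∀ i, pd (fun y => pd V i y * pd f i y) m x =
      pd (pd V i) m x * pd f i x + pd V i x * pd (pd f m) i x := by
    intro i
    rw [pd_mul ((hV.pd i).differentiable one_ne_zero x) ((hf2.pd i).differentiable one_ne_zero x),
      pd_comm hf2 i m]
  rw [show Lop V f = _ from funext (Lop_eq_sum V f),
    pd_sum univ (fun i _ => ((hd1 i).fun_sub (hd2 i)).differentiableAt), Lop_eq_sum,
    ← Finset.sum_sub_distrib]
  refine Finset.sum_congr rfl fun i _ => ?_
  rw [pd_sub (hd1 i x) (hd2 i x), hthird, hdrift]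
  ring

end Generator

section MatrixCalculus

variable {n : ℕ}

def pdVec (u : E n → Fin n → ℝ) (i : Fin n) (x : E n) : Fin n → ℝ :=
  fun k => pd (fun y => u y k) i x

def LopVec (V : E n → ℝ) (u : E n → Fin n → ℝ) (x : E n) : Fin n → ℝ :=
  fun k => Lop V (fun y => u y k) x

theorem pdM_apply (A : E n → Matrix (Fin n) (Fin n) ℝ) (i : Fin n) (x : E n) (k l : Fin n) :
    pdM A i x k l = pd (fun y => A y k l) i x :=
  rfl

theorem LparM_apply (V : E n → ℝ) (A : E n → Matrix (Fin n) (Fin n) ℝ) (x : E n) (k l : Fin n) :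
    LparM V A x k l = Lop V (fun y => A y k l) x :=
  rfl

theorem pdM_const (M : Matrix (Fin n) (Fin n) ℝ) (i : Fin n) (x : E n) :
    pdM (fun _ => M) i x = 0 := by
  ext k l
  exact pd_const _ i x

theorem LparM_const (V : E n → ℝ) (M : Matrix (Fin n) (Fin n) ℝ) (x : E n) :
    LparM V (fun _ => M) x = 0 := by
  ext k l
  exact Lop_const V _ x

theorem pd_sum_mul {ι : Type*} [Fintype ι] {a b : ι → E n → ℝ} {x : E n}
    (ha : ∀ m, DifferentiableAt ℝ (a m) x) (hb : ∀ m, DifferentiableAt ℝ (b m) x) (i : Fin n) :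
    pd (fun y => ∑ m, a m y * b m y) i x = ∑ m, (pd (a m) i x * b m x + a m x * pd (b m) i x) := by
  rw [pd_sum univ fun m _ => (ha m).fun_mul (hb m)]
  exact Finset.sum_congr rfl fun m _ => pd_mul (ha m) (hb m) i

theorem pdM_mul {A C : E n → Matrix (Fin n) (Fin n) ℝ} {x : E n}
    (hA : ∀ k l, DifferentiableAt ℝ (fun y => A y k l) x)
    (hC : ∀ k l, DifferentiableAt ℝ (fun y => C y k l) x) (i : Fin n) :
    pdM (fun y => A y * C y) i x = pdM A i x * C x + A x * pdM C i x := by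
  ext k l
  simp only [pdM_apply, mul_apply, Matrix.add_apply]
  rw [pd_sum_mul (fun m => hA k m) (fun m => hC m l), Finset.sum_add_distrib]

theorem pdVec_mulVec {C : E n → Matrix (Fin n) (Fin n) ℝ} {u : E n → Fin n → ℝ} {x : E n}
    (hC : ∀ k l, DifferentiableAt ℝ (fun y => C y k l) x)
    (hu : ∀ k, DifferentiableAt ℝ (fun y => u y k) x) (i : Fin n) :
    pdVec (fun y => C y *ᵥ u y) i x = pdM C i x *ᵥ u x + C x *ᵥ pdVec u i x := by
  ext k
  simp only [pdVec, mulVec, dotProduct, Pi.add_apply, pdM_apply]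
  rw [pd_sum_mul (fun m => hC k m) hu, Finset.sum_add_distrib]

variable (V : E n → ℝ)

theorem LparM_mul {A C : E n → Matrix (Fin n) (Fin n) ℝ}
    (hA : ∀ k l, ContDiff ℝ 2 fun y => A y k l) (hC : ∀ k l, ContDiff ℝ 2 fun y => C y k l)
    (x : E n) :
    LparM V (fun y => A y * C y) x =
      A x * LparM V C x + LparM V A x * C x + (2 : ℝ) • ∑ i, pdM A i x * pdM C i x := by
  ext k l
  simp only [LparM_apply, mul_apply, Matrix.add_apply, Matrix.smul_apply, Matrix.sum_apply,
    pdM_apply, smul_eq_mul]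
  rw [Lop_sum_mul V (fun m => hA k m) (fun m => hC m l), Finset.sum_add_distrib,
    Finset.sum_add_distrib, ← Finset.mul_sum, Finset.sum_comm]

theorem LopVec_mulVec {C : E n → Matrix (Fin n) (Fin n) ℝ} {u : E n → Fin n → ℝ}
    (hC : ∀ k l, ContDiff ℝ 2 fun y => C y k l) (hu : ∀ k, ContDiff ℝ 2 fun y => u y k)
    (x : E n) :
    LopVec V (fun y => C y *ᵥ u y) x =
      C x *ᵥ LopVec V u x + LparM V C x *ᵥ u x + (2 : ℝ) • ∑ i, pdM C i x *ᵥ pdVec u i x := by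
  ext k
  simp only [LopVec, mulVec, dotProduct, Pi.add_apply, Pi.smul_apply, Finset.sum_apply,
    LparM_apply, pdM_apply, pdVec, smul_eq_mul]
  rw [Lop_sum_mul V (fun m => hC k m) hu, Finset.sum_add_distrib, Finset.sum_add_distrib,
    ← Finset.mul_sum, Finset.sum_comm]

end MatrixCalculus

section Inverse

variable {F : Type*} [NormedAddCommGroup F] [NormedSpace ℝ F] {ι : Type*} [Fintype ι]
  [DecidableEq ι] {k : ℕ∞ω} {M : F → Matrix ι ι ℝ}

theorem contDiff_det (hM : ∀ i j, ContDiff ℝ k fun y => M y i j) :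
    ContDiff ℝ k fun y => (M y).det := by
  simp only [det_apply, Units.smul_def, zsmul_eq_mul]
  exact ContDiff.sum fun σ _ => contDiff_const.mul (contDiff_prod fun i _ => hM _ _)

theorem contDiff_inv_apply (hM : ∀ i j, ContDiff ℝ k fun y => M y i j)
    (hdet : ∀ y, IsUnit (M y).det) (i j : ι) : ContDiff ℝ k fun y => (M y)⁻¹ i j := by
  have hadj : ContDiff ℝ k fun y => (M y).adjugate i j := by
    simp only [adjugate_apply]
    refine contDiff_det fun a b => ?_
    by_cases h : a = j
    · simpa [updateRow_apply, h] using contDiff_const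
    · simpa [updateRow_apply, h] using hM a b
  simp only [Matrix.inv_def, Matrix.smul_apply, Ring.inverse_eq_inv', smul_eq_mul]
  exact ((contDiff_det hM).inv fun y => (hdet y).ne_zero).mul hadj

end Inverse

section InverseCalculus

variable {n : ℕ} {A : E n → Matrix (Fin n) (Fin n) ℝ}

theorem mul_pdM_inv (hA : ∀ k l, ContDiff ℝ 1 fun y => A y k l) (hdet : ∀ y, IsUnit (A y).det)
    (i : Fin n) (x : E n) :
    A x * pdM (fun y => (A y)⁻¹) i x = -(pdM A i x * (A x)⁻¹) := by
  have h := pdM_mul (x := x) (fun k l => (hA k l).differentiable one_ne_zero x)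
    (fun k l => (contDiff_inv_apply hA hdet k l).differentiable one_ne_zero x) i
  rw [show (fun y => A y * (A y)⁻¹) = fun _ => 1 from funext fun y => mul_nonsing_inv _ (hdet y),
    pdM_const] at h
  exact eq_neg_of_add_eq_zero_right h.symm

theorem mul_LparM_inv (V : E n → ℝ) (hA : ∀ k l, ContDiff ℝ 2 fun y => A y k l)
    (hdet : ∀ y, IsUnit (A y).det) (x : E n) :
    A x * LparM V (fun y => (A y)⁻¹) x + LparM V A x * (A x)⁻¹ +
      (2 : ℝ) • ∑ i, pdM A i x * pdM (fun y => (A y)⁻¹) i x = 0 := by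
  rw [← LparM_mul V hA (contDiff_inv_apply hA hdet),
    show (fun y => A y * (A y)⁻¹) = fun _ => 1 from funext fun y => mul_nonsing_inv _ (hdet y),
    LparM_const]

end InverseCalculus

-- `hDC` and `hLC` are what `∂ᵢ` and `L` give when applied to `A C = 1`.
theorem twisted_identity_of_inverse_rules {n : ℕ} {A C H LA LC : Matrix (Fin n) (Fin n) ℝ}
    {DA DC : Fin n → Matrix (Fin n) (Fin n) ℝ} (hCA : C * A = 1)
    (hDC : ∀ i, A * DC i = -(DA i * C))
    (hLC : A * LC + LA * C + (2 : ℝ) • ∑ i, DA i * DC i = 0)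
    (g Lg : Fin n → ℝ) (Dg : Fin n → Fin n → ℝ) :
    C *ᵥ (Lg - H *ᵥ g) =
      (C *ᵥ Lg + LC *ᵥ g + (2 : ℝ) • ∑ i, DC i *ᵥ Dg i)
        + (2 : ℝ) • (C *ᵥ ∑ i, DA i *ᵥ (DC i *ᵥ g + C *ᵥ Dg i))
        - (C * H * A - C * LA) *ᵥ (C *ᵥ g) := by
  have hAC : A * C = 1 := mul_eq_one_comm.mp hCA
  have hDC' : ∀ i, DC i = -(C * DA i * C) := fun i => by
    rw [← one_mul (DC i), ← hCA, Matrix.mul_assoc, hDC, Matrix.mul_neg, Matrix.mul_assoc]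
  have hLC' : LC = -(C * LA * C) - (2 : ℝ) • ∑ i, C * DA i * DC i := by
    have h := congrArg (C * ·) hLC
    simp only [Matrix.mul_add, Matrix.mul_zero, ← Matrix.mul_assoc, hCA, Matrix.one_mul,
      Matrix.mul_smul, Matrix.mul_sum] at h
    rw [← sub_eq_zero, ← h]
    abel
  rw [hLC']
  simp only [hDC', mulVec_add, mulVec_sub, sub_mulVec, neg_mulVec, mulVec_neg, smul_mulVec,
    sum_mulVec, mulVec_sum, mulVec_mulVec, Matrix.sub_mul, Matrix.mul_assoc, hAC, Matrix.mul_one,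
    Matrix.mul_neg, smul_neg, Finset.smul_sum, Finset.sum_neg_distrib, smul_add,
    Finset.sum_add_distrib]
  abel

section EuclideanCoordinates

variable {n : ℕ}

theorem ofLp_matVec (M : Matrix (Fin n) (Fin n) ℝ) (v : E n) : (matVec M v).ofLp = M *ᵥ v.ofLp :=
  rfl

theorem ofLp_gradient (f : E n → ℝ) (x : E n) : (gradient f x).ofLp = fun k => pd f k x :=
  funext (gradient_apply f x)

theorem ofLp_pdV {α : E n → E n} {x : E n} (hα : DifferentiableAt ℝ α x) (i : Fin n) :
    (pdV α i x).ofLp = pdVec (fun y => (α y).ofLp) i x := by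
  ext k
  have h := ((PiLp.hasFDerivAt_apply 2 (α x) k).comp x hα.hasFDerivAt).fderiv
  rw [pdVec, pd, show (fun y => (α y).ofLp k) = (fun v : E n => v k) ∘ α from rfl, h]
  rfl

theorem ofLp_LparB (V : E n → ℝ) (B : E n → Matrix (Fin n) (Fin n) ℝ) {α : E n → E n} {x : E n}
    (hα : DifferentiableAt ℝ α x) :
    (LparB V B α x).ofLp = LopVec V (fun y => (α y).ofLp) x +
      (2 : ℝ) • (((B x)ᵀ)⁻¹ *ᵥ
        ∑ i, pdM (fun y => (B y)ᵀ) i x *ᵥ pdVec (fun y => (α y).ofLp) i x) := by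
  simp only [LparB, WithLp.ofLp_add, WithLp.ofLp_smul, ofLp_matVec, WithLp.ofLp_sum, ofLp_pdV hα]
  rfl

theorem ofLp_gradient_Lop {V f : E n → ℝ} (hV : ContDiff ℝ 2 V) (hf : ContDiff ℝ 3 f) (x : E n) :
    (gradient (Lop V f) x).ofLp =
      LopVec V (fun y k => pd f k y) x - hessM V x *ᵥ fun k => pd f k x := by
  ext m
  simp [ofLp_gradient, pd_Lop V hV hf, LopVec, hessM, mulVec, dotProduct]

theorem differentiableAt_mulVec_apply {C : E n → Matrix (Fin n) (Fin n) ℝ} {u : E n → Fin n → ℝ}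
    {x : E n} (hC : ∀ k l, DifferentiableAt ℝ (fun y => C y k l) x)
    (hu : ∀ k, DifferentiableAt ℝ (fun y => u y k) x) (k : Fin n) :
    DifferentiableAt ℝ (fun y => (C y *ᵥ u y) k) x :=
  show DifferentiableAt ℝ (fun y => ∑ m, C y k m * u y m) x from
    DifferentiableAt.fun_sum fun m _ => (hC k m).fun_mul (hu m)

end EuclideanCoordinates

theorem twisted_intertwining_generators_general
    (n : ℕ) (V : E n → ℝ) (hV : ContDiff ℝ ∞ V)
    (B : E n → Matrix (Fin n) (Fin n) ℝ)
    (hB : ∀ i j, ContDiff ℝ ∞ fun x => B x i j)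
    (hBinv : ∀ x, IsUnit (B x).det)
    (f : E n → ℝ) (hf : ContDiff ℝ ∞ f) :
    ∀ x : E n,
      matVec ((B x)ᵀ)⁻¹ (gradient (Lop V f) x) =
        LparB V B (fun y => matVec ((B y)ᵀ)⁻¹ (gradient f y)) x -
          matVec (MB V B x) (matVec ((B x)ᵀ)⁻¹ (gradient f x)) := by
  intro x
  have hA : ∀ k l, ContDiff ℝ 2 fun y => (B y)ᵀ k l := fun k l => (hB l k).of_le ENat.LEInfty.out
  have hdet : ∀ y, IsUnit ((B y)ᵀ).det := fun y => by simpa using hBinv y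
  have hC := contDiff_inv_apply hA hdet
  have hf3 : ContDiff ℝ 3 f := hf.of_le ENat.LEInfty.out
  have hg : ∀ k, ContDiff ℝ 2 (pd f k) := fun k => hf3.pd k
  have hG : ∀ y, (matVec ((B y)ᵀ)⁻¹ (gradient f y)).ofLp = ((B y)ᵀ)⁻¹ *ᵥ fun k => pd f k y :=
    fun y => by rw [ofLp_matVec, ofLp_gradient]
  have hCx := fun k l => (hC k l).differentiable two_ne_zero x
  have hgx := fun k => (hg k).differentiable two_ne_zero x
  have hGx : DifferentiableAt ℝ (fun y => matVec ((B y)ᵀ)⁻¹ (gradient f y)) x :=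
    (differentiableAt_piLp 2).2 fun k => by
      simpa only [hG] using differentiableAt_mulVec_apply hCx hgx k
  apply WithLp.ofLp_injective
  rw [ofLp_matVec, ofLp_gradient_Lop (hV.of_le ENat.LEInfty.out) hf3, WithLp.ofLp_sub,
    ofLp_LparB V B hGx, ofLp_matVec, ofLp_matVec, ofLp_gradient]
  simp only [hG, LopVec_mulVec V hC hg, pdVec_mulVec hCx hgx]
  exact twisted_identity_of_inverse_rules (nonsing_inv_mul _ (hdet x))
    (fun i => mul_pdM_inv (fun k l => (hA k l).of_le one_le_two) hdet i x)
    (mul_LparM_inv V hA hdet x) _ _ _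

/-- **Twisted intertwining at the level of generators** (equation (4.12), Euclidean
instance): `B^{-T} ∇(Lf) = L^∥_B G - M_B G` where `G = B^{-T} ∇f`. -/
theorem twisted_intertwining_generators
    (n : ℕ) (hn : 1 ≤ n) (V : E n → ℝ) (hV : ContDiff ℝ ∞ V)
    (B : E n → Matrix (Fin n) (Fin n) ℝ)
    (hB : ∀ i j, ContDiff ℝ ∞ fun x => B x i j)
    (hBinv : ∀ x, IsUnit (B x).det)
    (f : E n → ℝ) (hf : ContDiff ℝ ∞ f) :
    ∀ x : E n,
      matVec ((B x)ᵀ)⁻¹ (gradient (Lop V f) x) =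
        LparB V B (fun y => matVec ((B y)ᵀ)⁻¹ (gradient f y)) x -
          matVec (MB V B x) (matVec ((B x)ᵀ)⁻¹ (gradient f x)) :=
  twisted_intertwining_generators_general n V hV B hB hBinv f hf
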